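/- Let I be a Borel fixed monomial ideal in k[x_1,…,x_n], and let x^a and x^c be monomials with x^c ∈ I, with partial sums b_i = Σ_{j≤i} a_j and d_i = Σ_{j≤i} c_j. If b_i ≥ d_i for all i and deg(x^a) ≥ deg(x^c), then x^a ∈ I. -/

import Mathlib

open MvPolynomial CategoryTheory

namespace Pol


/-- Total degree of an exponent vector. -/
def degE {σ : Type} (a : σ →₀ ℕ) : ℕ := a.sum fun _ e => e

/-- `I` is a monomial ideal. -/
def IsMonomialIdeal {σ k : Type} [CommRing k] (I : Ideal (MvPolynomial σ k)) : Prop :=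
  ∃ A : Set (σ →₀ ℕ), I = Ideal.span ((fun a => (monomial a 1 : MvPolynomial σ k)) '' A)

/-- `I` is a squarefree monomial ideal. -/
def IsSquarefreeMonomialIdeal {σ k : Type} [CommRing k] (I : Ideal (MvPolynomial σ k)) : Prop :=
  ∃ A : Set (σ →₀ ℕ), (∀ a ∈ A, ∀ i, a i ≤ 1) ∧
    I = Ideal.span ((fun a => (monomial a 1 : MvPolynomial σ k)) '' A)

/-- Borel fixed (strongly stable) exchange property: `m ∈ I`, `x_i ∣ m`, `j < i`
implies `(x_j/x_i)·m ∈ I`. -/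
def IsBorelFixed {n : ℕ} {k : Type} [CommRing k] (I : Ideal (MvPolynomial (Fin n) k)) : Prop :=
  ∀ a : Fin n →₀ ℕ, (monomial a 1 : MvPolynomial (Fin n) k) ∈ I →
    ∀ i j : Fin n, j < i → a i ≠ 0 →
      (monomial (a + Finsupp.single j 1 - Finsupp.single i 1) 1 : MvPolynomial (Fin n) k) ∈ I

/-- `x^a` is a minimal generator of the monomial ideal `I`. -/
def IsMinGen {σ k : Type} [CommRing k] (I : Ideal (MvPolynomial σ k)) (a : σ →₀ ℕ) : Prop :=
  (monomial a 1 : MvPolynomial σ k) ∈ I ∧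
    ∀ i : σ, a i ≠ 0 → (monomial (a - Finsupp.single i 1) 1 : MvPolynomial σ k) ∉ I

/-- partial sum `b_i = a_1 + ⋯ + a_i` (cutoff `i : ℕ`, counting the first `i` variables). -/
def psum {n : ℕ} (a : Fin n →₀ ℕ) (i : ℕ) : ℕ :=
  ∑ j ∈ Finset.univ.filter (fun j : Fin n => (j : ℕ) < i), a j

/-- The exponent vector of `B(x^a)`: the variables `x_{i,j}` with
`b_{i-1}+1 ≤ j ≤ b_i` (in 0-indexed form `b_{i-1} ≤ j < b_i`). -/
noncomputable def boxExp {n : ℕ} (d : ℕ) (a : Fin n →₀ ℕ) : (Fin n × Fin d) →₀ ℕ :=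
  ∑ p ∈ Finset.univ.filter
      (fun p : Fin n × Fin d => psum a (p.1 : ℕ) ≤ (p.2 : ℕ) ∧ (p.2 : ℕ) < psum a ((p.1 : ℕ) + 1)),
    Finsupp.single p 1

/-- The exponent vector of the standard polarization `pol(x^a) = ∏_i x_{i,1} ⋯ x_{i,a_i}`. -/
noncomputable def polExp {n : ℕ} (d : ℕ) (a : Fin n →₀ ℕ) : (Fin n × Fin d) →₀ ℕ :=
  ∑ p ∈ Finset.univ.filter (fun p : Fin n × Fin d => (p.2 : ℕ) < a p.1), Finsupp.single p 1

/-- `B(I)`, generated by `B(m)` for minimal generators `m` of `I`. -/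
noncomputable def boxIdeal {n : ℕ} {k : Type} [CommRing k] (d : ℕ) (I : Ideal (MvPolynomial (Fin n) k)) :
    Ideal (MvPolynomial (Fin n × Fin d) k) :=
  Ideal.span {q | ∃ a : Fin n →₀ ℕ, IsMinGen I a ∧ q = monomial (boxExp d a) 1}

/-- The sequence `Θ = (x_{i,1} - x_{i,j})_{1 ≤ i ≤ n, 2 ≤ j ≤ d}` (0-indexed: `j ≥ 1`). -/
noncomputable def thetaList (n d : ℕ) (k : Type) [CommRing k] : List (MvPolynomial (Fin n × Fin d) k) :=
  (List.finRange n).flatMap fun i =>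
    ((List.finRange d).drop 1).map fun (j : Fin d) =>
      X (i, (⟨0, Nat.lt_of_le_of_lt (Nat.zero_le j.val) j.isLt⟩ : Fin d)) - X (i, j)

/-- The depolarization map `φ : Ŝ → S`, `x_{i,j} ↦ x_i`. -/
noncomputable def phi (n d : ℕ) (k : Type) [CommRing k] :
    MvPolynomial (Fin n × Fin d) k →ₐ[k] MvPolynomial (Fin n) k :=
  rename Prod.fst

/-! Multiplying `x^c` by a power of the last variable reduces to the case `deg x^c = deg x^a`,
where the last partial sums agree. Then, while `c ≠ a`, one Borel move `x^c ↦ (x_j / x_i) x^c`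
keeps the partial sums of `c` below those of `a` while raising one of them, so the total gap
`∑ s, (b_s - d_s)` drops and induction on it ends at `c = a`. -/

lemma degE_eq_degree {σ : Type} (a : σ →₀ ℕ) : degE a = a.degree := rfl

section PartialSums

variable {n : ℕ}

lemma psum_zero (a : Fin n →₀ ℕ) : psum a 0 = 0 := by
  simp [psum]

lemma psum_add (a b : Fin n →₀ ℕ) (s : ℕ) : psum (a + b) s = psum a s + psum b s :=
  Finset.sum_add_distrib

lemma psum_single (i : Fin n) (r s : ℕ) :
    psum (Finsupp.single i r) s = if (i : ℕ) < s then r else 0 := by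
  classical
  simp [psum, Finsupp.single_apply]

lemma psum_succ (a : Fin n →₀ ℕ) (i : Fin n) : psum a (i + 1) = psum a i + a i := by
  have : Finset.univ.filter (fun j : Fin n => (j : ℕ) < i + 1)
      = insert i (Finset.univ.filter (fun j : Fin n => (j : ℕ) < i)) := by
    ext j
    simp [Fin.le_iff_val_le_val.symm, le_iff_eq_or_lt]
  rw [psum, this, Finset.sum_insert (by simp), add_comm]
  rfl

lemma psum_of_le (a : Fin n →₀ ℕ) {s : ℕ} (hs : n ≤ s) : psum a s = degE a := by
  rw [degE_eq_degree, Finsupp.degree_eq_sum, psum, Finset.filter_true_of_mem]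
  exact fun j _ => j.isLt.trans_le hs

lemma psum_mono (a : Fin n →₀ ℕ) : Monotone (psum a) := fun _ _ hst =>
  Finset.sum_le_sum_of_subset fun j => by simpa using fun hj => hj.trans_le hst

lemma eq_of_psum_eq {a b : Fin n →₀ ℕ} (h : ∀ s, psum a s = psum b s) : a = b := by
  ext i
  have := psum_succ a i
  rw [h, h, psum_succ] at this
  omega

end PartialSums

/-- The exponent vector of `(x_j / x_i) · x^c`, the monomial produced by a Borel move. -/
noncomputable def borelMove {n : ℕ} (c : Fin n →₀ ℕ) (j i : Fin n) : Fin n →₀ ℕ :=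
  c + Finsupp.single j 1 - Finsupp.single i 1

section BorelMove

variable {n : ℕ} {c : Fin n →₀ ℕ} {i j : Fin n}

lemma psum_borelMove (hji : j < i) (hci : c i ≠ 0) (s : ℕ) :
    psum (borelMove c j i) s = if (j : ℕ) < s ∧ s ≤ i then psum c s + 1 else psum c s := by
  have hle : Finsupp.single i 1 ≤ c := Finsupp.single_le_iff.2 (Nat.one_le_iff_ne_zero.2 hci)
  have hsplit : psum c s = psum (c - Finsupp.single i 1) s + psum (Finsupp.single i 1) s := by
    rw [← psum_add, tsub_add_cancel_of_le hle]
  rw [borelMove, ← tsub_add_eq_add_tsub hle, psum_add, psum_single, hsplit, psum_single]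
  have : (j : ℕ) < i := hji
  split_ifs <;> omega

lemma degE_borelMove (hji : j < i) (hci : c i ≠ 0) : degE (borelMove c j i) = degE c := by
  rw [← psum_of_le _ le_rfl, psum_borelMove hji hci, if_neg (by omega), psum_of_le _ le_rfl]

lemma sum_psum_sub_borelMove_lt {a : Fin n →₀ ℕ} (hji : j < i) (hci : c i ≠ 0)
    (hdom : ∀ s, psum (borelMove c j i) s ≤ psum a s) :
    ∑ s ∈ Finset.range n, (psum a s - psum (borelMove c j i) s)
      < ∑ s ∈ Finset.range n, (psum a s - psum c s) := by
  have hmove := psum_borelMove hji hci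
  refine Finset.sum_lt_sum (fun s _ => ?_) ⟨i, by simp, ?_⟩
  · have := hmove s
    split_ifs at this <;> omega
  · have := hdom i
    rw [hmove, if_pos ⟨hji, le_rfl⟩] at this ⊢
    omega

end BorelMove

section Dominance

variable {n : ℕ} {a c : Fin n →₀ ℕ}

lemma exists_ne_zero_psum_le_of_psum_lt_degE {t : ℕ} (ht : psum c t < degE c) :
    ∃ i : Fin n, t ≤ i ∧ c i ≠ 0 ∧ psum c i ≤ psum c t := by
  classical
  have hsurplus : ∃ r, psum c t < psum c (r + 1) := ⟨n, by rwa [psum_of_le c (Nat.le_succ n)]⟩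
  set r := Nat.find hsurplus
  have hr : psum c t < psum c (r + 1) := Nat.find_spec hsurplus
  have hflat : psum c r ≤ psum c t := by
    rcases Nat.eq_zero_or_pos r with h | h
    · simp [h, psum_zero]
    · have := Nat.find_min hsurplus (show r - 1 < r by omega)
      rwa [not_lt, Nat.sub_add_cancel h] at this
  have htr : t ≤ r := by
    by_contra h
    exact (hr.trans_le (psum_mono c (by omega))).false
  have hrn : r < n := by
    by_contra h
    rw [psum_of_le c (by omega : n ≤ r + 1)] at hr
    rw [psum_of_le c (by omega)] at hflat
    omega
  refine ⟨⟨r, hrn⟩, htr, ?_, hflat⟩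
  have := psum_succ c ⟨r, hrn⟩
  simp only at this
  omega

/-- Move one unit of `c` from its first nonzero exponent at or after `t` down to `t - 1`, where
`t` is any place at which the partial sums of `c` fall short of those of `a`. -/
lemma exists_borelMove_psum_le (hdom : ∀ s, psum c s ≤ psum a s) (hdeg : degE c = degE a)
    (hne : c ≠ a) :
    ∃ i j : Fin n, j < i ∧ c i ≠ 0 ∧ ∀ s, psum (borelMove c j i) s ≤ psum a s := by
  obtain ⟨t, ht⟩ : ∃ t, psum c t < psum a t := by
    by_contra! h
    exact hne (eq_of_psum_eq fun s => le_antisymm (hdom s) (h s))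
  have ht0 : t ≠ 0 := by
    rintro h
    simp [h, psum_zero] at ht
  have htn : t ≤ n := by
    by_contra h
    rw [psum_of_le c (by omega), psum_of_le a (by omega), hdeg] at ht
    exact ht.false
  obtain ⟨i, hti, hci, hflat⟩ := exists_ne_zero_psum_le_of_psum_lt_degE <| by
    rw [hdeg, ← psum_of_le a le_rfl]
    exact ht.trans_le (psum_mono a htn)
  have hji : (⟨t - 1, by omega⟩ : Fin n) < i := Fin.mk_lt_mk.2 (by omega)
  refine ⟨i, _, hji, hci, fun s => ?_⟩
  rw [psum_borelMove hji hci]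
  split_ifs with hs
  · have h1 := psum_mono c (show s ≤ i from hs.2)
    have h2 := psum_mono a (show t ≤ s by simp at hs; omega)
    omega
  · exact hdom s

lemma exists_le_degE_eq_psum_le (hdom : ∀ s, psum c s ≤ psum a s) (hdeg : degE c ≤ degE a) :
    ∃ c', c ≤ c' ∧ degE c' = degE a ∧ ∀ s, psum c' s ≤ psum a s := by
  cases n with
  | zero => exact ⟨a, by rw [Subsingleton.elim c a], rfl, fun _ => le_rfl⟩
  | succ m =>
    refine ⟨c + Finsupp.single (Fin.last m) (degE a - degE c), le_self_add, ?_, fun s => ?_⟩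
    · rw [degE_eq_degree, map_add, Finsupp.degree_single, ← degE_eq_degree]
      omega
    · rw [psum_add, psum_single]
      split_ifs with hs
      · rw [psum_of_le c (by simpa using hs), psum_of_le a (by simpa using hs)]
        omega
      · simpa using hdom s

theorem mem_of_psum_le_of_degE_eq {k : Type} [CommRing k] {I : Ideal (MvPolynomial (Fin n) k)}
    (hB : IsBorelFixed I) (hc : (monomial c 1 : MvPolynomial (Fin n) k) ∈ I)
    (hdom : ∀ s, psum c s ≤ psum a s) (hdeg : degE c = degE a) :
    (monomial a 1 : MvPolynomial (Fin n) k) ∈ I := by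
  induction hm : ∑ s ∈ Finset.range n, (psum a s - psum c s) using Nat.strong_induction_on
    generalizing c with
  | _ m ih =>
    by_cases hca : c = a
    · rwa [← hca]
    obtain ⟨i, j, hji, hci, hdom'⟩ := exists_borelMove_psum_le hdom hdeg hca
    exact ih _ (hm ▸ sum_psum_sub_borelMove_lt hji hci hdom') (hB c hc i j hji hci) hdom'
      ((degE_borelMove hji hci).trans hdeg) rfl

end Dominance

theorem mem_of_psum_dominates_general (n : ℕ) (k : Type) [Field k]
    (I : Ideal (MvPolynomial (Fin n) k)) (hB : IsBorelFixed I)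
    (a c : Fin n →₀ ℕ) (hc : (monomial c 1 : MvPolynomial (Fin n) k) ∈ I)
    (hdom : ∀ i : ℕ, psum c i ≤ psum a i) (hdeg : degE c ≤ degE a) :
    (monomial a 1 : MvPolynomial (Fin n) k) ∈ I := by
  obtain ⟨c', hcc', hdeg', hdom'⟩ := exists_le_degE_eq_psum_le hdom hdeg
  have hc' : (monomial c' 1 : MvPolynomial (Fin n) k) ∈ I :=
    Ideal.mem_of_dvd _ (monomial_dvd_monomial.2 ⟨Or.inr hcc', one_dvd _⟩) hc
  exact mem_of_psum_le_of_degE_eq hB hc' hdom' hdeg'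

/-- if `I` is Borel fixed, `x^c ∈ I`, the partial sums of `a` dominate those
of `c`, and `deg x^a ≥ deg x^c`, then `x^a ∈ I`. -/
theorem mem_of_psum_dominates (n : ℕ) (k : Type) [Field k]
    (I : Ideal (MvPolynomial (Fin n) k)) (hmon : IsMonomialIdeal I) (hB : IsBorelFixed I)
    (a c : Fin n →₀ ℕ) (hc : (monomial c 1 : MvPolynomial (Fin n) k) ∈ I)
    (hdom : ∀ i : ℕ, psum c i ≤ psum a i) (hdeg : degE c ≤ degE a) :
    (monomial a 1 : MvPolynomial (Fin n) k) ∈ I :=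
  mem_of_psum_dominates_general n k I hB a c hc hdom hdeg

end Pol
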